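/- The hazard function r(t) = λ₀ F(t) + μ(1 − exp(−∫_0^t e^{−δw} F(t−w) dw)) is nondecreasing in t for any cdf F of a nonnegative random variable, any λ₀ ≥ 0, μ ≥ 0, δ > 0; hence W_[1] has an increasing failure rate (IFR) distribution. -/
import Mathlib


open MeasureTheory Real

/-- the hazard function
`r(t) = λ₀ F(t) + μ(1 − exp(−∫_0^t e^{−δw} F(t−w) dw))` is nondecreasing in `t` for any
cdf `F` of a nonnegative random variable, any `λ₀ ≥ 0`, `μ ≥ 0`, `δ > 0`; hence `W_[1]`
has an increasing failure rate (IFR) distribution. -/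
theorem hazard_W1_monotone
    (lam0 mu delta : ℝ) (F : ℝ → ℝ)
    (hlam0 : 0 ≤ lam0) (hmu : 0 ≤ mu) (hdelta : 0 < delta)
    (hF_mono : Monotone F) (hF01 : ∀ x, 0 ≤ F x ∧ F x ≤ 1)
    (hF_neg : ∀ x ≤ (0:ℝ), F x = 0) :
    Monotone (fun t => lam0 * F t
      + mu * (1 - Real.exp (-∫ w in (0:ℝ)..t, Real.exp (-delta * w) * F (t - w)))) := by
  have hFmeas : Measurable F := hF_mono.measurable
  -- integrability of the integrand on any interval
  have hint : ∀ t a b : ℝ, IntervalIntegrable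
      (fun w => Real.exp (-delta * w) * F (t - w)) volume a b := by
    intro t a b
    have hexp : IntervalIntegrable (fun w => Real.exp (-delta * w)) volume a b :=
      (Real.continuous_exp.comp (continuous_const.mul continuous_id)).intervalIntegrable a b
    refine hexp.mono_fun ?_ ?_
    · exact ((Real.continuous_exp.comp
        (continuous_const.mul continuous_id)).measurable.mul
        (hFmeas.comp (measurable_const.sub measurable_id))).aestronglyMeasurable
    · refine Filter.Eventually.of_forall fun w => ?_
      have h0 := (hF01 (t - w)).1
      have h1 := (hF01 (t - w)).2
      have he : (0:ℝ) < Real.exp (-delta * w) := Real.exp_pos _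
      simp only [Real.norm_eq_abs]
      rw [abs_of_nonneg (mul_nonneg he.le h0), abs_of_nonneg he.le]
      calc Real.exp (-delta * w) * F (t - w) ≤ Real.exp (-delta * w) * 1 :=
            mul_le_mul_of_nonneg_left h1 he.le
        _ = Real.exp (-delta * w) := mul_one _
  -- the inner integral is monotone
  have hI : Monotone (fun t => ∫ w in (0:ℝ)..t, Real.exp (-delta * w) * F (t - w)) := by
    intro s t hst
    simp only
    have hzero : ∀ u : ℝ, u ≤ 0 →
        (∫ w in (0:ℝ)..u, Real.exp (-delta * w) * F (u - w)) = 0 := by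
      intro u hu
      rw [intervalIntegral.integral_congr (g := fun _ => (0:ℝ)), intervalIntegral.integral_zero]
      intro w hw
      rw [Set.uIcc_of_ge hu] at hw
      have : u - w ≤ 0 := by linarith [hw.1]
      simp [hF_neg _ this]
    have hnonneg : ∀ u : ℝ, (0:ℝ) ≤ u →
        (0:ℝ) ≤ ∫ w in (0:ℝ)..u, Real.exp (-delta * w) * F (u - w) := by
      intro u hu
      apply intervalIntegral.integral_nonneg hu
      intro w _
      exact mul_nonneg (Real.exp_pos _).le (hF01 _).1
    rcases le_or_gt t 0 with ht | ht
    · rw [hzero s (hst.trans ht), hzero t ht]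
    rcases le_or_gt s 0 with hs | hs
    · rw [hzero s hs]; exact hnonneg t ht.le
    -- 0 < s ≤ t
    calc (∫ w in (0:ℝ)..s, Real.exp (-delta * w) * F (s - w))
        ≤ ∫ w in (0:ℝ)..s, Real.exp (-delta * w) * F (t - w) := by
          apply intervalIntegral.integral_mono_on hs.le (hint s 0 s) (hint t 0 s)
          intro w _
          exact mul_le_mul_of_nonneg_left (hF_mono (by linarith)) (Real.exp_pos _).le
      _ ≤ ∫ w in (0:ℝ)..t, Real.exp (-delta * w) * F (t - w) := by
          apply intervalIntegral.integral_mono_interval le_rfl hs.le hst ?_ (hint t 0 t)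
          refine Filter.Eventually.of_forall fun w => ?_
          exact mul_nonneg (Real.exp_pos _).le (hF01 _).1
  intro s t hst
  simp only
  have h1 : lam0 * F s ≤ lam0 * F t := mul_le_mul_of_nonneg_left (hF_mono hst) hlam0
  have h2 : mu * (1 - Real.exp (-∫ w in (0:ℝ)..s, Real.exp (-delta * w) * F (s - w)))
      ≤ mu * (1 - Real.exp (-∫ w in (0:ℝ)..t, Real.exp (-delta * w) * F (t - w))) := by
    apply mul_le_mul_of_nonneg_left _ hmu
    have := hI hst
    have := Real.exp_le_exp.mpr (neg_le_neg this)
    linarith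
  linarith
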